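/- arXiv:2406.02970 — 6 statements merged into one kernel-verified Lean document; each statement's English description precedes it below -/
import Mathlib

section
/- Let $h : \mathbb{R} \to \mathbb{R}$ be continuous and bounded above. Then the concave envelope of $h$ satisfies, for every $z \in \mathbb{R}$, $\operatorname{conc} h(z) = \sup\{\mathbb{E}[h(z+U)] : U \in L^2(\Omega),\ \mathbb{E}[U]=0\}$, where the supremum is over all square-integrable centered real random variables $U$. -/
open MeasureTheory

/-- Existence of a tangent (supergradient) line for a concave function on ℝ. -/
lemma concave_exists_tangent {g : ℝ → ℝ} (hg : ConcaveOn ℝ Set.univ g) (z : ℝ) :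
    ∃ s : ℝ, ∀ y, g y ≤ g z + s * (y - z) := by
  have hf : ConvexOn ℝ Set.univ (fun x => -g x) := hg.neg
  set σ : ℝ → ℝ := fun y => ((-g y) - (-g z)) / (y - z) with hσ
  have mono : ∀ x y : ℝ, x ≠ z → y ≠ z → x ≤ y → σ x ≤ σ y := fun x y hx hy hxy =>
    hf.secant_mono (Set.mem_univ z) (Set.mem_univ x) (Set.mem_univ y) hx hy hxy
  have hne : (σ '' Set.Iio z).Nonempty := ⟨σ (z - 1), ⟨z - 1, by simp, rfl⟩⟩
  have hbdd : BddAbove (σ '' Set.Iio z) := by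
    refine ⟨σ (z + 1), ?_⟩
    rintro _ ⟨y, hy, rfl⟩
    have hy' : y < z := hy
    exact mono y (z + 1) (ne_of_lt hy') (by norm_num) (by linarith)
  set s := sSup (σ '' Set.Iio z) with hs
  refine ⟨-s, fun y => ?_⟩
  rcases lt_trichotomy y z with hlt | rfl | hgt
  · have h1 : σ y ≤ s := le_csSup hbdd ⟨y, hlt, rfl⟩
    have hyz : y - z ≠ 0 := by intro hc; linarith [sub_eq_zero.mp hc]
    have he : (-g y) - (-g z) = σ y * (y - z) := by simp only [hσ]; rw [div_mul_cancel₀ _ hyz]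
    nlinarith
  · simp
  · have h1 : s ≤ σ y := by
      refine csSup_le hne ?_
      rintro _ ⟨x, hx, rfl⟩
      have hx' : x < z := hx
      exact mono x y (ne_of_lt hx') (ne_of_gt hgt) (by linarith)
    have hyz : y - z ≠ 0 := by intro hc; linarith [sub_eq_zero.mp hc]
    have he : (-g y) - (-g z) = σ y * (y - z) := by simp only [hσ]; rw [div_mul_cancel₀ _ hyz]
    nlinarith

/-- Jensen-type upper bound: any centered representation is dominated by any
concave majorant evaluated at `z`. -/
lemma rep_le_majorant {h g : ℝ → ℝ} (hg : ConcaveOn ℝ Set.univ g)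
    (hle : ∀ x, h x ≤ g x) (z : ℝ) (ν : Measure ℝ) [IsProbabilityMeasure ν]
    (hL2 : MemLp (fun x : ℝ => x) 2 ν) (hmean : (∫ x, x ∂ν) = 0)
    (hint : Integrable (fun x => h (z + x)) ν) :
    ∫ x, h (z + x) ∂ν ≤ g z := by
  obtain ⟨s, hs⟩ := concave_exists_tangent hg z
  have hx1 : Integrable (fun x : ℝ => x) ν :=
    (hL2.mono_exponent (by norm_num)).integrable le_rfl
  have hmaj : Integrable (fun x : ℝ => g z + s * x) ν :=
    (integrable_const _).add (hx1.const_mul s)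
  have hmono : ∫ x, h (z + x) ∂ν ≤ ∫ x, (g z + s * x) ∂ν := by
    refine integral_mono hint hmaj fun x => ?_
    have := hs (z + x)
    have h2 : g (z + x) ≤ g z + s * x := by simpa using this
    exact (hle (z + x)).trans h2
  calc ∫ x, h (z + x) ∂ν ≤ ∫ x, (g z + s * x) ∂ν := hmono
    _ = g z + s * ∫ x, x ∂ν := by
        rw [integral_add (integrable_const _) (hx1.const_mul s), integral_const,
          integral_const_mul]
        simp
    _ = g z := by rw [hmean]; ring

/-- The representation predicate. -/
def IsRep (h : ℝ → ℝ) (w : ℝ) (ν : Measure ℝ) : Prop :=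
  IsProbabilityMeasure ν ∧ MemLp (fun x : ℝ => x) 2 ν ∧ (∫ x, x ∂ν) = 0 ∧
    Integrable (fun x => h (w + x)) ν

def Tset (h : ℝ → ℝ) (w : ℝ) : Set ℝ :=
  {y | ∃ ν : Measure ℝ, IsRep h w ν ∧ y = ∫ x, h (w + x) ∂ν}

lemma dirac_mem (h : ℝ → ℝ) (hcont : Continuous h) (w : ℝ) : h w ∈ Tset h w := by
  have hae : (fun x : ℝ => x) =ᵐ[Measure.dirac (0 : ℝ)] fun _ => (0 : ℝ) := by
    simp [Filter.EventuallyEq, ae_dirac_eq]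
  have hae2 : (fun x : ℝ => h (w + x)) =ᵐ[Measure.dirac (0 : ℝ)] fun _ => h w := by
    simp [Filter.EventuallyEq, ae_dirac_eq]
  refine ⟨Measure.dirac 0, ⟨inferInstance, (memLp_const (0 : ℝ)).ae_eq hae.symm, ?_, ?_⟩, ?_⟩
  · rw [integral_dirac]
  · exact (integrable_const (h w)).congr hae2.symm
  · rw [integral_dirac]; simp

lemma Tset_bdd {h : ℝ → ℝ} {M : ℝ} (hM : ∀ x, h x ≤ M) (w : ℝ) :
    ∀ y ∈ Tset h w, y ≤ M := by
  rintro _ ⟨ν, ⟨hp, hL2, hm, hi⟩, rfl⟩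
  haveI := hp
  calc ∫ x, h (w + x) ∂ν ≤ ∫ _x, M ∂ν := integral_mono hi (integrable_const M) fun x => hM _
    _ = M := by simp

/-- Shifting a representation measure. -/
lemma shift_props (h : ℝ → ℝ) (hcont : Continuous h) {w : ℝ} {ν : Measure ℝ}
    (hp : IsProbabilityMeasure ν) (hL2 : MemLp (fun x : ℝ => x) 2 ν)
    (hm : ∫ x, x ∂ν = 0) (hi : Integrable (fun x => h (w + x)) ν) (c : ℝ) :
    IsProbabilityMeasure (ν.map (· + c)) ∧ MemLp (fun x : ℝ => x) 2 (ν.map (· + c)) ∧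
    (∫ x, x ∂(ν.map (· + c))) = c ∧ Integrable (fun x => h (w - c + x)) (ν.map (· + c)) ∧
    ∫ x, h (w - c + x) ∂(ν.map (· + c)) = ∫ x, h (w + x) ∂ν := by
  have hmeas : Measurable (fun x : ℝ => x + c) := measurable_id.add_const c
  have hx1 : Integrable (fun x : ℝ => x) ν :=
    (hL2.mono_exponent (by norm_num)).integrable le_rfl
  have hfe : (fun x : ℝ => h (w - c + (x + c))) = fun x => h (w + x) := by
    funext x; congr 1; ring
  refine ⟨Measure.isProbabilityMeasure_map hmeas.aemeasurable, ?_, ?_, ?_, ?_⟩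
  · rw [memLp_map_measure_iff measurable_id'.aestronglyMeasurable hmeas.aemeasurable]
    exact (hL2.add (memLp_const c) : MemLp (fun x : ℝ => x + c) 2 ν)
  · rw [integral_map hmeas.aemeasurable measurable_id'.aestronglyMeasurable]
    show (∫ x, (x + c) ∂ν) = c
    rw [integral_add hx1 (integrable_const c), hm, integral_const]
    simp
  · rw [integrable_map_measure
      (Continuous.aestronglyMeasurable (by continuity : Continuous fun x : ℝ => h (w - c + x)))
      hmeas.aemeasurable]
    show Integrable (fun x => h (w - c + (x + c))) ν
    rw [hfe]; exact hi
  · rw [integral_map hmeas.aemeasurable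
      (Continuous.aestronglyMeasurable (by continuity : Continuous fun x : ℝ => h (w - c + x)))]
    show ∫ x, h (w - c + (x + c)) ∂ν = _
    rw [hfe]

/-- Combining two representations into one at the convex combination point. -/
lemma isRep_combo {h : ℝ → ℝ} (hcont : Continuous h) {a b t s : ℝ} (ht : 0 < t) (hs : 0 < s)
    (hts : t + s = 1) {ν1 ν2 : Measure ℝ} (h1 : IsRep h a ν1) (h2 : IsRep h b ν2) :
    t * (∫ x, h (a + x) ∂ν1) + s * (∫ x, h (b + x) ∂ν2) ∈ Tset h (t * a + s * b) := by
  obtain ⟨hp1, hL1, hm1, hi1⟩ := h1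
  obtain ⟨hp2, hL2, hm2, hi2⟩ := h2
  set zb := t * a + s * b with hzb
  have hc1 : a - (a - zb) = zb := by ring
  have hc2 : b - (b - zb) = zb := by ring
  obtain ⟨q1, l1, m1, i1, e1⟩ := shift_props h hcont hp1 hL1 hm1 hi1 (a - zb)
  obtain ⟨q2, l2, m2, i2, e2⟩ := shift_props h hcont hp2 hL2 hm2 hi2 (b - zb)
  rw [hc1] at i1 e1
  rw [hc2] at i2 e2
  set μ1 := ν1.map (· + (a - zb))
  set μ2 := ν2.map (· + (b - zb))
  haveI := q1; haveI := q2
  have hx1 : Integrable (fun x : ℝ => x) μ1 :=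
    (l1.mono_exponent (by norm_num)).integrable le_rfl
  have hx2 : Integrable (fun x : ℝ => x) μ2 :=
    (l2.mono_exponent (by norm_num)).integrable le_rfl
  set μ : Measure ℝ := ENNReal.ofReal t • μ1 + ENNReal.ofReal s • μ2 with hμ
  have htne : ENNReal.ofReal t ≠ ⊤ := ENNReal.ofReal_ne_top
  have hsne : ENNReal.ofReal s ≠ ⊤ := ENNReal.ofReal_ne_top
  have htr : (ENNReal.ofReal t).toReal = t := ENNReal.toReal_ofReal ht.le
  have hsr : (ENNReal.ofReal s).toReal = s := ENNReal.toReal_ofReal hs.le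
  have hprob : IsProbabilityMeasure μ := by
    constructor
    simp only [hμ, Measure.add_apply, Measure.smul_apply, smul_eq_mul, measure_univ, mul_one]
    rw [← ENNReal.ofReal_add ht.le hs.le, hts, ENNReal.ofReal_one]
  have hL : MemLp (fun x : ℝ => x) 2 μ := by
    rw [memLp_two_iff_integrable_sq measurable_id'.aestronglyMeasurable]
    exact ((memLp_two_iff_integrable_sq measurable_id'.aestronglyMeasurable).mp l1).smul_measure
      htne |>.add_measure (((memLp_two_iff_integrable_sq
        measurable_id.aestronglyMeasurable).mp l2).smul_measure hsne)
  have hxint : Integrable (fun x : ℝ => x) μ :=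
    (hx1.smul_measure htne).add_measure (hx2.smul_measure hsne)
  have hmean : (∫ x, x ∂μ) = 0 := by
    rw [hμ, integral_add_measure (hx1.smul_measure htne) (hx2.smul_measure hsne),
      integral_smul_measure, integral_smul_measure, m1, m2, htr, hsr]
    simp only [smul_eq_mul, hzb]
    linear_combination (-(t * a + s * b)) * hts
  have hint : Integrable (fun x => h (zb + x)) μ :=
    (i1.smul_measure htne).add_measure (i2.smul_measure hsne)
  refine ⟨μ, ⟨hprob, hL, hmean, hint⟩, ?_⟩
  rw [hμ, integral_add_measure (i1.smul_measure htne) (i2.smul_measure hsne),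
    integral_smul_measure, integral_smul_measure, e1, e2, htr, hsr]
  simp [smul_eq_mul]

/-- Variational representation of the concave envelope via centered L² laws. -/
theorem conc_env_variational (h : ℝ → ℝ) (hcont : Continuous h)
    (hbdd : BddAbove (Set.range h)) (z : ℝ) :
    sInf {y : ℝ | ∃ g : ℝ → ℝ, ConcaveOn ℝ Set.univ g ∧ (∀ x, h x ≤ g x) ∧ y = g z}
      = sSup {y : ℝ | ∃ ν : Measure ℝ, IsProbabilityMeasure ν ∧
          MemLp (fun x : ℝ => x) 2 ν ∧ (∫ x, x ∂ν) = 0 ∧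
          Integrable (fun x => h (z + x)) ν ∧ y = ∫ x, h (z + x) ∂ν} := by
  obtain ⟨M, hM⟩ := hbdd
  have hMle : ∀ x, h x ≤ M := fun x => hM ⟨x, rfl⟩
  have hTeq : {y : ℝ | ∃ ν : Measure ℝ, IsProbabilityMeasure ν ∧
          MemLp (fun x : ℝ => x) 2 ν ∧ (∫ x, x ∂ν) = 0 ∧
          Integrable (fun x => h (z + x)) ν ∧ y = ∫ x, h (z + x) ∂ν} = Tset h z := by
    ext y
    constructor
    · rintro ⟨ν, p1, p2, p3, p4, p5⟩; exact ⟨ν, ⟨p1, p2, p3, p4⟩, p5⟩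
    · rintro ⟨ν, ⟨p1, p2, p3, p4⟩, p5⟩; exact ⟨ν, p1, p2, p3, p4, p5⟩
  rw [hTeq]
  set S := {y : ℝ | ∃ g : ℝ → ℝ, ConcaveOn ℝ Set.univ g ∧ (∀ x, h x ≤ g x) ∧ y = g z} with hS
  have hSne : S.Nonempty := ⟨M, fun _ => M, concaveOn_const M convex_univ, hMle, rfl⟩
  have hSbdd : BddBelow S := by
    refine ⟨h z, ?_⟩
    rintro _ ⟨g, hg, hgle, rfl⟩
    exact hgle z
  have hTne : ∀ w, (Tset h w).Nonempty := fun w => ⟨h w, dirac_mem h hcont w⟩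
  have hTbdd : ∀ w, BddAbove (Tset h w) := fun w => ⟨M, fun y hy => Tset_bdd hMle w y hy⟩
  -- the sup function is a concave majorant
  set G : ℝ → ℝ := fun w => sSup (Tset h w) with hG
  have hGmaj : ∀ x, h x ≤ G x := fun x => le_csSup (hTbdd x) (dirac_mem h hcont x)
  have hGconc : ConcaveOn ℝ Set.univ G := by
    refine ⟨convex_univ, ?_⟩
    rintro x - y - t s ht hs hts
    rcases eq_or_lt_of_le ht with hteq | htpos
    · have : s = 1 := by linarith
      simp [← hteq, this]
    rcases eq_or_lt_of_le hs with hseq | hspos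
    · have : t = 1 := by linarith
      simp [← hseq, this]
    simp only [smul_eq_mul]
    have key : ∀ y1 ∈ Tset h x, ∀ y2 ∈ Tset h y, t * y1 + s * y2 ≤ G (t * x + s * y) := by
      rintro _ ⟨ν1, r1, rfl⟩ _ ⟨ν2, r2, rfl⟩
      exact le_csSup (hTbdd _) (isRep_combo hcont htpos hspos hts r1 r2)
    have e2 : ∀ y1 ∈ Tset h x, s * sSup (Tset h y) ≤ G (t * x + s * y) - t * y1 := by
      intro y1 hy1
      have hsup : sSup (Tset h y) ≤ (G (t * x + s * y) - t * y1) / s := by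
        refine csSup_le (hTne y) fun y2 hy2 => ?_
        rw [le_div_iff₀ hspos]
        have := key y1 hy1 y2 hy2
        linarith
      calc s * sSup (Tset h y) ≤ s * ((G (t * x + s * y) - t * y1) / s) :=
            mul_le_mul_of_nonneg_left hsup hspos.le
        _ = G (t * x + s * y) - t * y1 := by field_simp
    have e1 : t * sSup (Tset h x) ≤ G (t * x + s * y) - s * sSup (Tset h y) := by
      have hsup : sSup (Tset h x) ≤ (G (t * x + s * y) - s * sSup (Tset h y)) / t := by
        refine csSup_le (hTne x) fun y1 hy1 => ?_
        rw [le_div_iff₀ htpos]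
        have := e2 y1 hy1
        linarith
      calc t * sSup (Tset h x) ≤ t * ((G (t * x + s * y) - s * sSup (Tset h y)) / t) :=
            mul_le_mul_of_nonneg_left hsup htpos.le
        _ = G (t * x + s * y) - s * sSup (Tset h y) := by field_simp
    have : G x = sSup (Tset h x) := rfl
    linarith [e1]
  apply le_antisymm
  · exact csInf_le hSbdd ⟨G, hGconc, hGmaj, rfl⟩
  · refine csSup_le (hTne z) ?_
    rintro _ ⟨ν, ⟨hp, hL2, hm, hi⟩, rfl⟩
    refine le_csInf hSne ?_
    rintro _ ⟨g, hg, hgle, rfl⟩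
    haveI := hp
    exact rep_le_majorant hg hgle z ν hL2 hm hi
end

section
/- Let $b, d > 0$ with $b \ge \sqrt{2}\, d$, and let $A$ be a bounded random variable with $0 \le A \le d$ almost surely. Then $\mathbb{E}\left[\frac{b^2}{A+b}\right] \cdot \mathbb{E}\left[\frac{(b+2A)^2}{A+b}\right] \le \frac{b^2 (b+2d)^2}{(d+b)^2}$. -/
open MeasureTheory

/-- Expectation inequality for a bounded random variable A ∈ [0, d] when b ≥ √2 d. -/
theorem expectation_product_bound {Ω : Type*} [MeasureSpace Ω]
    [IsProbabilityMeasure (volume : Measure Ω)]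
    (b d : ℝ) (hb : 0 < b) (hd : 0 < d) (hbd : Real.sqrt 2 * d ≤ b)
    (A : Ω → ℝ) (hmeas : Measurable A)
    (hA : ∀ᵐ ω ∂(volume : Measure Ω), A ω ∈ Set.Icc 0 d) :
    (∫ ω, b ^ 2 / (A ω + b)) * (∫ ω, (b + 2 * A ω) ^ 2 / (A ω + b))
      ≤ b ^ 2 * (b + 2 * d) ^ 2 / (d + b) ^ 2 := by
  have hdb : 0 < d + b := by linarith
  have hb2 : 2 * d ^ 2 ≤ b ^ 2 := by
    have h2 : Real.sqrt 2 ^ 2 = 2 := Real.sq_sqrt (by norm_num)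
    nlinarith [mul_le_mul hbd hbd (by positivity : (0:ℝ) ≤ Real.sqrt 2 * d) hb.le]
  -- integrability of A
  have hIntA : Integrable A := by
    refine (integrable_const d).mono' hmeas.aestronglyMeasurable ?_
    filter_upwards [hA] with ω hω
    rw [Real.norm_eq_abs, abs_of_nonneg hω.1]; exact hω.2
  set t := ∫ ω, A ω with ht
  have ht0 : 0 ≤ t := integral_nonneg_of_ae (hA.mono fun ω h => h.1)
  have htd : t ≤ d := by
    have := integral_mono_ae hIntA (integrable_const d) (hA.mono fun ω h => h.2)
    simpa using this
  -- pointwise chord bounds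
  have hf_bd : ∀ᵐ ω ∂(volume : Measure Ω),
      b ^ 2 / (A ω + b) ≤ b - (b / (d + b)) * A ω := by
    filter_upwards [hA] with ω hω
    have hpos : 0 < A ω + b := by linarith [hω.1]
    have h1 : 0 ≤ A ω * (d - A ω) := mul_nonneg hω.1 (by linarith [hω.2])
    have e : b - b / (d + b) * A ω = b * (d + b - A ω) / (d + b) := by
      field_simp; try ring
    rw [e, div_le_div_iff₀ hpos hdb]
    nlinarith [mul_nonneg hb.le h1]
  have hg_bd : ∀ᵐ ω ∂(volume : Measure Ω),
      (b + 2 * A ω) ^ 2 / (A ω + b) ≤ b + ((3 * b + 4 * d) / (d + b)) * A ω := by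
    filter_upwards [hA] with ω hω
    have hpos : 0 < A ω + b := by linarith [hω.1]
    have h1 : 0 ≤ A ω * (d - A ω) := mul_nonneg hω.1 (by linarith [hω.2])
    have e : b + (3 * b + 4 * d) / (d + b) * A ω
        = (b * (d + b) + (3 * b + 4 * d) * A ω) / (d + b) := by
      field_simp; try ring
    rw [e, div_le_div_iff₀ hpos hdb]
    nlinarith [h1, mul_nonneg hω.1 h1]
  -- nonnegativity of integrands
  have hf_nn : ∀ᵐ ω ∂(volume : Measure Ω), 0 ≤ b ^ 2 / (A ω + b) := by
    filter_upwards [hA] with ω hω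
    exact div_nonneg (by positivity) (by linarith [hω.1])
  have hg_nn : ∀ᵐ ω ∂(volume : Measure Ω), 0 ≤ (b + 2 * A ω) ^ 2 / (A ω + b) := by
    filter_upwards [hA] with ω hω
    exact div_nonneg (by positivity) (by linarith [hω.1])
  -- integrability of integrands
  have hmf : AEStronglyMeasurable (fun ω => b ^ 2 / (A ω + b)) (volume : Measure Ω) :=
    (measurable_const.div (hmeas.add_const b)).aestronglyMeasurable
  have hmg : AEStronglyMeasurable (fun ω => (b + 2 * A ω) ^ 2 / (A ω + b))
      (volume : Measure Ω) :=
    (((measurable_const.add ((measurable_const.mul hmeas))).pow_const 2).div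
      (hmeas.add_const b)).aestronglyMeasurable
  have hIntf : Integrable (fun ω => b ^ 2 / (A ω + b)) := by
    refine (integrable_const b).mono' hmf ?_
    filter_upwards [hf_bd, hf_nn, hA] with ω h1 h2 hω
    rw [Real.norm_eq_abs, abs_of_nonneg h2]
    have : (b / (d + b)) * A ω ≥ 0 := mul_nonneg (by positivity) hω.1
    linarith
  have hIntg : Integrable (fun ω => (b + 2 * A ω) ^ 2 / (A ω + b)) := by
    refine (integrable_const (b + ((3 * b + 4 * d) / (d + b)) * d)).mono' hmg ?_
    filter_upwards [hg_bd, hg_nn, hA] with ω h1 h2 hω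
    rw [Real.norm_eq_abs, abs_of_nonneg h2]
    have : ((3 * b + 4 * d) / (d + b)) * A ω ≤ ((3 * b + 4 * d) / (d + b)) * d :=
      mul_le_mul_of_nonneg_left hω.2 (by positivity)
    linarith
  -- linear bounds on integrals
  have hIf : (∫ ω, b ^ 2 / (A ω + b)) ≤ b - (b / (d + b)) * t := by
    have hgi : Integrable (fun ω => b - b / (d + b) * A ω) :=
      (integrable_const b).sub (hIntA.const_mul _)
    have := integral_mono_ae hIntf hgi hf_bd
    rwa [integral_sub (integrable_const b) (hIntA.const_mul _), integral_const,
      integral_const_mul, probReal_univ, smul_eq_mul, one_mul] at this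
  have hIg : (∫ ω, (b + 2 * A ω) ^ 2 / (A ω + b))
      ≤ b + ((3 * b + 4 * d) / (d + b)) * t := by
    have hgi : Integrable (fun ω => b + (3 * b + 4 * d) / (d + b) * A ω) :=
      (integrable_const b).add (hIntA.const_mul _)
    have := integral_mono_ae hIntg hgi hg_bd
    rwa [integral_add (integrable_const b) (hIntA.const_mul _), integral_const,
      integral_const_mul, probReal_univ, smul_eq_mul, one_mul] at this
  have hIf_nn : 0 ≤ ∫ ω, b ^ 2 / (A ω + b) := integral_nonneg_of_ae hf_nn
  have hgU_nn : 0 ≤ b + ((3 * b + 4 * d) / (d + b)) * t := by positivity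
  calc (∫ ω, b ^ 2 / (A ω + b)) * (∫ ω, (b + 2 * A ω) ^ 2 / (A ω + b))
      ≤ (b - (b / (d + b)) * t) * (b + ((3 * b + 4 * d) / (d + b)) * t) := by
        apply mul_le_mul hIf hIg (integral_nonneg_of_ae hg_nn) ?_
        have : (b / (d + b)) * t ≤ (b / (d + b)) * d :=
          mul_le_mul_of_nonneg_left htd (by positivity)
        have hdd : b / (d + b) * d < b := by
          rw [div_mul_eq_mul_div, div_lt_iff₀ hdb]; nlinarith
        linarith
    _ ≤ b ^ 2 * (b + 2 * d) ^ 2 / (d + b) ^ 2 := by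
        have e3 : b - b / (d + b) * t = (b * (d + b) - b * t) / (d + b) := by
          field_simp; try ring
        have e4 : b + (3 * b + 4 * d) / (d + b) * t
            = (b * (d + b) + (3 * b + 4 * d) * t) / (d + b) := by
          field_simp; try ring
        have hinner : 0 ≤ 2 * b ^ 2 - 4 * d * t + 3 * b * (d - t) := by
          nlinarith [mul_le_mul_of_nonneg_left htd hd.le,
            mul_nonneg hb.le (sub_nonneg.2 htd)]
        have key : (b * (d + b) - b * t) * (b * (d + b) + (3 * b + 4 * d) * t)
            ≤ b ^ 2 * (b + 2 * d) ^ 2 := by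
          nlinarith [mul_nonneg (mul_nonneg hb.le (sub_nonneg.2 htd)) hinner]
        calc (b - b / (d + b) * t) * (b + (3 * b + 4 * d) / (d + b) * t)
            = (b * (d + b) - b * t) * (b * (d + b) + (3 * b + 4 * d) * t) / (d + b) ^ 2 := by
              rw [e3, e4, div_mul_div_comm, ← pow_two]
          _ ≤ b ^ 2 * (b + 2 * d) ^ 2 / (d + b) ^ 2 := by gcongr
end

section
/- Let $h : \mathbb{R} \to \mathbb{R}$ be continuous and bounded above, and for $c > 0$ define $h_c(x) = \operatorname{conc}(h(x) - \frac{x^2}{2c}) + \frac{x^2}{2c}$. Then $c \mapsto h_c(x)$ is nondecreasing for each fixed $x$, $h_c \ge h$ pointwise, and $\lim_{c \to 0^+} h_c(x) = h(x)$ for every $x$. -/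
/-- The concave envelope: pointwise infimum of all concave majorants. -/
noncomputable def concEnv (g : ℝ → ℝ) (z : ℝ) : ℝ :=
  sInf {y : ℝ | ∃ φ : ℝ → ℝ, ConcaveOn ℝ Set.univ φ ∧ (∀ x, g x ≤ φ x) ∧ y = φ z}

lemma quadConcave (a b d : ℝ) (ha : 0 ≤ a) :
    ConcaveOn ℝ Set.univ (fun z => d + b * z - a * z ^ 2) := by
  refine ⟨convex_univ, fun x _ y _ p q hp hq hpq => ?_⟩
  simp only [smul_eq_mul]
  have hq1 : q = 1 - p := by linarith
  subst hq1
  nlinarith [mul_nonneg (mul_nonneg ha (mul_nonneg hp hq)) (sq_nonneg (x - y)), sq_nonneg (x - y)]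

/-- Monotonicity in c, domination of h, and the limit c → 0⁺ for
h_c = conc(h − x²/(2c)) + x²/(2c). -/
theorem hc_monotone_dominates_limit (h : ℝ → ℝ)
    (hcont : Continuous h) (hbdd : BddAbove (Set.range h))
    (hc : ℝ → ℝ → ℝ)
    (hhc : ∀ c x, hc c x = concEnv (fun z => h z - z ^ 2 / (2 * c)) x + x ^ 2 / (2 * c)) :
    (∀ x : ℝ, ∀ c₁ c₂ : ℝ, 0 < c₁ → c₁ ≤ c₂ → hc c₁ x ≤ hc c₂ x) ∧
      (∀ c : ℝ, 0 < c → ∀ x, h x ≤ hc c x) ∧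
      (∀ x : ℝ, Filter.Tendsto (fun c => hc c x)
        (nhdsWithin 0 (Set.Ioi 0)) (nhds (h x))) := by
  obtain ⟨M, hM⟩ := hbdd
  have hM' : ∀ z, h z ≤ M := fun z => hM ⟨z, rfl⟩
  set S : ℝ → ℝ → Set ℝ := fun c x =>
    {y : ℝ | ∃ φ : ℝ → ℝ, ConcaveOn ℝ Set.univ φ ∧
      (∀ z, (fun z => h z - z ^ 2 / (2 * c)) z ≤ φ z) ∧ y = φ x} with hS
  have hce : ∀ c x, concEnv (fun z => h z - z ^ 2 / (2 * c)) x = sInf (S c x) := by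
    intro c x; rfl
  have lb : ∀ c x : ℝ, ∀ y ∈ S c x, h x - x ^ 2 / (2 * c) ≤ y := by
    rintro c x y ⟨φ, _, hφ, rfl⟩; exact hφ x
  have bdd : ∀ c x, BddBelow (S c x) := fun c x => ⟨_, lb c x⟩
  have ne : ∀ c : ℝ, 0 < c → ∀ x, (S c x).Nonempty := by
    intro c hcpos x
    refine ⟨_, (fun z => M + 0 * z - (1 / (2 * c)) * z ^ 2), quadConcave _ _ _ (by positivity), ?_, rfl⟩
    intro z
    have : z ^ 2 / (2 * c) = (1 / (2 * c)) * z ^ 2 := by ring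
    have := hM' z
    linarith [hM' z, (by ring : (1 / (2 * c)) * z ^ 2 = z ^ 2 / (2 * c))]
  have domin : ∀ c : ℝ, 0 < c → ∀ x, h x ≤ hc c x := by
    intro c hcpos x
    rw [hhc, hce]
    have := le_csInf (ne c hcpos x) (lb c x)
    linarith
  have mono : ∀ x : ℝ, ∀ c₁ c₂ : ℝ, 0 < c₁ → c₁ ≤ c₂ → hc c₁ x ≤ hc c₂ x := by
    intro x c₁ c₂ h1 h12
    have h2 : 0 < c₂ := lt_of_lt_of_le h1 h12
    set a : ℝ := 1 / (2 * c₁) - 1 / (2 * c₂) with haa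
    have ha : 0 ≤ a := by
      have : 1 / (2 * c₂) ≤ 1 / (2 * c₁) :=
        one_div_le_one_div_of_le (by linarith) (by linarith)
      rw [haa]; linarith
    clear_value a
    rw [hhc, hhc, hce, hce]
    have key : sInf (S c₁ x) + x ^ 2 / (2 * c₁) - x ^ 2 / (2 * c₂) ≤ sInf (S c₂ x) := by
      apply le_csInf (ne c₂ h2 x)
      rintro y ⟨φ, hφc, hφm, rfl⟩
      have hmem : φ x + (0 + 0 * x - a * x ^ 2) ∈ S c₁ x := by
        refine ⟨fun z => φ z + (0 + 0 * z - a * z ^ 2),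
          hφc.add (quadConcave a 0 0 ha), ?_, rfl⟩
        intro z
        have he : a * z ^ 2 = z ^ 2 / (2 * c₁) - z ^ 2 / (2 * c₂) := by
          rw [haa]; field_simp
        have := hφm z
        simp only at this ⊢
        linarith
      have := csInf_le (bdd c₁ x) hmem
      have he : a * x ^ 2 = x ^ 2 / (2 * c₁) - x ^ 2 / (2 * c₂) := by
        rw [haa]; field_simp
      linarith
    linarith
  refine ⟨mono, domin, ?_⟩
  intro x
  rw [Metric.tendsto_nhdsWithin_nhds]
  intro ε hε
  obtain ⟨δ₀, hδ₀, hnear⟩ := Metric.continuous_iff.mp hcont x (ε / 2) (half_pos hε)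
  set K : ℝ := |M - h x| + 1 with hK
  have hKpos : 0 < K := by positivity
  have hKM : M - h x ≤ K := by
    have := le_abs_self (M - h x); linarith
  refine ⟨δ₀ ^ 2 / (4 * K), by positivity, ?_⟩
  intro c hcIoi hcd
  have hcpos : 0 < c := hcIoi
  rw [Real.dist_eq, sub_zero, abs_of_pos hcpos] at hcd
  have hfar : M ≤ h x + δ₀ ^ 2 / (4 * c) := by
    have h1 : c * (4 * K) < δ₀ ^ 2 :=
      (lt_div_iff₀ (by positivity : (0:ℝ) < 4 * K)).mp hcd
    have h2 : K < δ₀ ^ 2 / (4 * c) := by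
      rw [lt_div_iff₀ (by positivity : (0:ℝ) < 4 * c)]
      nlinarith
    linarith
  have key : ∀ z, h z ≤ h x + ε / 2 + (z - x) ^ 2 / (4 * c) := by
    intro z
    by_cases hz : dist z x < δ₀
    · have := hnear z hz
      rw [Real.dist_eq] at this
      have h3 : h z - h x < ε / 2 := lt_of_le_of_lt (le_abs_self _) this
      have h4 : (0:ℝ) ≤ (z - x) ^ 2 / (4 * c) := by positivity
      linarith
    · push_neg at hz
      rw [Real.dist_eq] at hz
      have h5 : δ₀ ^ 2 ≤ (z - x) ^ 2 := by
        have := sq_abs (z - x)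
        nlinarith [abs_nonneg (z - x)]
      have h6 : δ₀ ^ 2 / (4 * c) ≤ (z - x) ^ 2 / (4 * c) := by gcongr
      linarith [hM' z, hε]
  have hup : sInf (S c x) ≤ h x + ε / 2 - x ^ 2 / (2 * c) := by
    apply csInf_le (bdd c x)
    refine ⟨fun z => (h x + ε / 2 + x ^ 2 / (4 * c)) + (-(x / (2 * c))) * z
      - (1 / (4 * c)) * z ^ 2, quadConcave _ _ _ (by positivity), ?_, ?_⟩
    · intro z
      have hid : (h x + ε / 2 + x ^ 2 / (4 * c)) + (-(x / (2 * c))) * z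
          - (1 / (4 * c)) * z ^ 2
          = h x + ε / 2 + (z - x) ^ 2 / (4 * c) - z ^ 2 / (2 * c) := by
        field_simp; ring
      simp only
      rw [hid]
      linarith [key z]
    · field_simp; ring
  have hlo : h x ≤ hc c x := domin c hcpos x
  have hup2 : hc c x ≤ h x + ε / 2 := by
    rw [hhc, hce]; linarith
  rw [Real.dist_eq, abs_of_nonneg (by linarith)]
  linarith
end

section
/- Let $h$ be continuous and bounded above, $c > 0$, and $h_c(x) = \operatorname{conc}(h(x) - \frac{x^2}{2c}) + \frac{x^2}{2c}$. Fix $x \in \mathbb{R}$ and assume $c \mapsto h_c(x)$ is differentiable with derivative $g_c(x)$. Then $h_c(x) = h(x)$ if and only if $g_c(x) = 0$. -/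
lemma concEnv_bddBelow (g : ℝ → ℝ) (z : ℝ) :
    BddBelow {y : ℝ | ∃ φ : ℝ → ℝ, ConcaveOn ℝ Set.univ φ ∧ (∀ x, g x ≤ φ x) ∧ y = φ z} := by
  refine ⟨g z, ?_⟩
  rintro y ⟨φ, hφ, hm, rfl⟩
  exact hm z

lemma concEnv_le (g φ : ℝ → ℝ) (z : ℝ) (hφ : ConcaveOn ℝ Set.univ φ)
    (hm : ∀ x, g x ≤ φ x) : concEnv g z ≤ φ z :=
  csInf_le (concEnv_bddBelow g z) ⟨φ, hφ, hm, rfl⟩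

lemma le_concEnv (g : ℝ → ℝ) (z : ℝ)
    (hne : ∃ φ : ℝ → ℝ, ConcaveOn ℝ Set.univ φ ∧ ∀ x, g x ≤ φ x) :
    g z ≤ concEnv g z := by
  obtain ⟨φ, hφ, hm⟩ := hne
  refine le_csInf ⟨φ z, φ, hφ, hm, rfl⟩ ?_
  rintro y ⟨ψ, hψ, hmm, rfl⟩
  exact hmm z

lemma exists_majorant_lt (g : ℝ → ℝ) (z ε : ℝ) (hε : 0 < ε)
    (hne : ∃ φ : ℝ → ℝ, ConcaveOn ℝ Set.univ φ ∧ ∀ x, g x ≤ φ x) :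
    ∃ φ : ℝ → ℝ, ConcaveOn ℝ Set.univ φ ∧ (∀ x, g x ≤ φ x) ∧ φ z < concEnv g z + ε := by
  obtain ⟨φ0, h1, h2⟩ := hne
  obtain ⟨y, hy, hlt⟩ := Real.lt_sInf_add_pos (s :=
    {y : ℝ | ∃ φ : ℝ → ℝ, ConcaveOn ℝ Set.univ φ ∧ (∀ x, g x ≤ φ x) ∧ y = φ z})
    ⟨φ0 z, φ0, h1, h2, rfl⟩ hε
  obtain ⟨φ, hφ, hm, rfl⟩ := hy
  exact ⟨φ, hφ, hm, hlt⟩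

lemma affine_concaveOn (m b : ℝ) : ConcaveOn ℝ Set.univ (fun z : ℝ => m * z + b) := by
  refine ⟨convex_univ, ?_⟩
  intro p _ r _ a a' ha ha' hab
  simp only [smul_eq_mul]
  have : a * (m * p + b) + a' * (m * r + b) = m * (a * p + a' * r) + b := by
    linear_combination b * hab
  linarith [this.le]

lemma parab_concaveOn (M t : ℝ) (ht : 0 ≤ t) :
    ConcaveOn ℝ Set.univ (fun z : ℝ => M - t * (z ^ 2 / 2)) := by
  have h1 : ConvexOn ℝ Set.univ (fun z : ℝ => z ^ 2) := Even.convexOn_pow even_two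
  have h2 := ((h1.smul (by linarith : (0:ℝ) ≤ t / 2)).neg).add_const M
  have heq : (fun z : ℝ => M - t * (z ^ 2 / 2)) =
      (-((t / 2) • fun z : ℝ => z ^ 2) + fun _ : ℝ => M) := by
    funext z
    simp only [Pi.add_apply, Pi.neg_apply, Pi.smul_apply, smul_eq_mul]
    ring
  rw [heq]
  exact h2

/-- h_c(x) = h(x) if and only if the derivative g_c(x) = ∂_c h_c(x) vanishes. -/
theorem hc_eq_iff_deriv_zero (h : ℝ → ℝ)
    (hcont : Continuous h) (hbdd : BddAbove (Set.range h))
    (c x gc : ℝ) (hcpos : 0 < c)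
    (hc : ℝ → ℝ → ℝ)
    (hhc : ∀ c' x', hc c' x' =
      concEnv (fun z => h z - z ^ 2 / (2 * c')) x' + x' ^ 2 / (2 * c'))
    (hderiv : HasDerivAt (fun c' => hc c' x) gc c) :
    hc c x = h x ↔ gc = 0 := by
  obtain ⟨M, hM⟩ := hbdd
  have hMle : ∀ z, h z ≤ M := fun z => hM (Set.mem_range_self z)
  -- The function E in the variable t = 1/c'
  set E : ℝ → ℝ := fun t => concEnv (fun z => h z - t * (z ^ 2 / 2)) x + t * (x ^ 2 / 2)
    with hEdef
  -- nonemptiness of the majorant set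
  have hmajor : ∀ t : ℝ, 0 ≤ t →
      ∃ φ : ℝ → ℝ, ConcaveOn ℝ Set.univ φ ∧ ∀ z, h z - t * (z ^ 2 / 2) ≤ φ z := by
    intro t ht
    exact ⟨fun z => M - t * (z ^ 2 / 2), parab_concaveOn M t ht,
      fun z => by have := hMle z; linarith⟩
  -- E t ≥ h x for t > 0
  have hElb : ∀ t : ℝ, 0 < t → h x ≤ E t := by
    intro t ht
    have := le_concEnv (fun z => h z - t * (z ^ 2 / 2)) x (hmajor t ht.le)
    simp only [hEdef]
    linarith [this]
  -- relation between hc and E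
  have hFE : ∀ c' : ℝ, c' ≠ 0 → hc c' x = E (1 / c') := by
    intro c' hc'
    rw [hhc c' x]
    have hfun : (fun z : ℝ => h z - z ^ 2 / (2 * c')) =
        fun z : ℝ => h z - (1 / c') * (z ^ 2 / 2) := by
      funext z; field_simp
    rw [hfun]
    simp only [hEdef]
    congr 1
    field_simp
  -- convexity of E on (0, ∞)
  have hEconv : ConvexOn ℝ (Set.Ioi (0:ℝ)) E := by
    refine ⟨convex_Ioi 0, ?_⟩
    intro t1 ht1 t2 ht2 a b ha hb hab
    simp only [smul_eq_mul]
    have ht1' : (0:ℝ) < t1 := ht1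
    have ht2' : (0:ℝ) < t2 := ht2
    have key : ∀ ε : ℝ, 0 < ε →
        E (a * t1 + b * t2) ≤ a * E t1 + b * E t2 + ε := by
      intro ε hε
      obtain ⟨φ1, hφ1, hm1, hy1⟩ :=
        exists_majorant_lt (fun z => h z - t1 * (z ^ 2 / 2)) x ε hε (hmajor t1 ht1'.le)
      obtain ⟨φ2, hφ2, hm2, hy2⟩ :=
        exists_majorant_lt (fun z => h z - t2 * (z ^ 2 / 2)) x ε hε (hmajor t2 ht2'.le)
      -- combined majorant
      have hψconc : ConcaveOn ℝ Set.univ (fun z => a * φ1 z + b * φ2 z) := by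
        have h1 := (hφ1.smul ha).add (hφ2.smul hb)
        convert h1 using 1
        all_goals rfl
      have hψmaj : ∀ z, h z - (a * t1 + b * t2) * (z ^ 2 / 2) ≤ a * φ1 z + b * φ2 z := by
        intro z
        have h1 := hm1 z
        have h2 := hm2 z
        have hsplit : h z - (a * t1 + b * t2) * (z ^ 2 / 2) =
            a * (h z - t1 * (z ^ 2 / 2)) + b * (h z - t2 * (z ^ 2 / 2)) := by
          linear_combination (-(h z)) * hab
        rw [hsplit]
        have ha1 := mul_le_mul_of_nonneg_left h1 ha
        have hb1 := mul_le_mul_of_nonneg_left h2 hb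
        linarith
      have hle : concEnv (fun z => h z - (a * t1 + b * t2) * (z ^ 2 / 2)) x ≤
          a * φ1 x + b * φ2 x :=
        concEnv_le _ _ x hψconc hψmaj
      have ha1 := mul_le_mul_of_nonneg_left hy1.le ha
      have hb1 := mul_le_mul_of_nonneg_left hy2.le hb
      have hsplit2 : (a * t1 + b * t2) * (x ^ 2 / 2) =
          a * (t1 * (x ^ 2 / 2)) + b * (t2 * (x ^ 2 / 2)) := by ring
      simp only [hEdef]
      nlinarith [hle, ha1, hb1]
    -- conclude from the epsilon bound
    exact le_of_forall_pos_le_add key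
  -- E t gets close to h x for large t
  have happrox : ∀ ε : ℝ, 0 < ε → ∀ T : ℝ, ∃ t : ℝ, T < t ∧ 0 < t ∧ E t ≤ h x + ε := by
    intro ε hε T
    obtain ⟨δ, hδ, hδball⟩ := Metric.continuousAt_iff.mp (hcont.continuousAt (x := x)) ε hε
    set t := max (max T 0 + 1) (2 * (M - h x) / δ ^ 2) with htdef
    have htT : T < t := lt_of_le_of_lt (le_max_left T 0) (by
      have : max T 0 + 1 ≤ t := le_max_left _ _
      linarith)
    have htpos : 0 < t := lt_of_le_of_lt (le_max_right T 0) (by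
      have : max T 0 + 1 ≤ t := le_max_left _ _
      linarith)
    have htbig : 2 * (M - h x) / δ ^ 2 ≤ t := le_max_right _ _
    refine ⟨t, htT, htpos, ?_⟩
    -- affine majorant
    set φ : ℝ → ℝ := fun z => (-(t * x)) * z + (h x + ε - t * (x ^ 2 / 2) + t * x * x)
      with hφdef
    have hφconc : ConcaveOn ℝ Set.univ φ := affine_concaveOn _ _
    have hφmaj : ∀ z, h z - t * (z ^ 2 / 2) ≤ φ z := by
      intro z
      have key : h z - h x - ε ≤ t * (z - x) ^ 2 / 2 := by
        by_cases hzx : dist z x < δ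
        · have := hδball hzx
          have h1 : |h z - h x| < ε := by
            simpa [Real.dist_eq] using this
          have h2 : h z - h x < ε := lt_of_le_of_lt (le_abs_self _) h1
          nlinarith [sq_nonneg (z - x), htpos]
        · push_neg at hzx
          have hd : δ ≤ |z - x| := by simpa [Real.dist_eq] using hzx
          have hd2 : δ ^ 2 ≤ (z - x) ^ 2 := by
            have := sq_abs (z - x)
            nlinarith [abs_nonneg (z - x)]
          have hMx : h x ≤ M := hMle x
          have h3 : M - h x ≤ t * δ ^ 2 / 2 := by
            rw [div_le_iff₀ (by positivity)] at htbig
            nlinarith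
          have h4 : t * δ ^ 2 / 2 ≤ t * (z - x) ^ 2 / 2 := by nlinarith
          have h5 : h z ≤ M := hMle z
          linarith
      simp only [hφdef]
      nlinarith [key]
    have h1 : concEnv (fun z => h z - t * (z ^ 2 / 2)) x ≤ φ x :=
      concEnv_le _ φ x hφconc hφmaj
    have h2 : φ x = h x + ε - t * (x ^ 2 / 2) := by simp only [hφdef]; ring
    simp only [hEdef]
    linarith
  -- derivative of E at t0 = 1/c
  set t0 : ℝ := c⁻¹ with ht0def
  have ht0pos : 0 < t0 := inv_pos.mpr hcpos
  have ht0ne : t0 ≠ 0 := ne_of_gt ht0pos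
  have hct0 : t0⁻¹ = c := by simp [ht0def]
  have hEc : hc c x = E t0 := by
    rw [hFE c (ne_of_gt hcpos)]
    simp [ht0def, one_div]
  have hEderiv : HasDerivAt E (gc * (-(t0 ^ 2)⁻¹)) t0 := by
    have hinv : HasDerivAt (fun t : ℝ => t⁻¹) (-(t0 ^ 2)⁻¹) t0 := hasDerivAt_inv ht0ne
    have hcomp : HasDerivAt (fun t : ℝ => hc t⁻¹ x) (gc * (-(t0 ^ 2)⁻¹)) t0 := by
      have := HasDerivAt.comp t0 (hct0 ▸ hderiv) hinv
      simpa [Function.comp_def] using this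
    have heq : E =ᶠ[nhds t0] fun t : ℝ => hc t⁻¹ x := by
      filter_upwards [Ioi_mem_nhds ht0pos] with t ht
      rw [hFE t⁻¹ (inv_ne_zero (ne_of_gt ht))]
      simp
    exact hcomp.congr_of_eventuallyEq heq
  constructor
  · -- hc c x = h x → gc = 0
    intro heq
    have hmin : IsLocalMin (fun c' => hc c' x) c := by
      have : ∀ᶠ c' in nhds c, hc c x ≤ hc c' x := by
        filter_upwards [Ioi_mem_nhds hcpos] with c' hc'
        rw [hFE c' (ne_of_gt hc'), heq]
        exact hElb (1 / c') (one_div_pos.mpr hc')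
      exact this
    exact hmin.hasDerivAt_eq_zero hderiv
  · -- gc = 0 → hc c x = h x
    intro hgc
    rw [hEc]
    refine le_antisymm ?_ (hElb t0 ht0pos)
    have hE0 : HasDerivAt E 0 t0 := by
      have hzero : gc * (-(t0 ^ 2)⁻¹) = 0 := by rw [hgc]; ring
      exact hzero ▸ hEderiv
    -- for each ε, find t > t0 with E t ≤ h x + ε, and tangent line at t0 gives E t0 ≤ E t
    have hfinal : ∀ ε : ℝ, 0 < ε → E t0 ≤ h x + ε := by
      intro ε hε
      obtain ⟨t, htt0, htpos, htE⟩ := happrox ε hε t0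
      have hslope := hEconv.le_slope_of_hasDerivAt (Set.mem_Ioi.mpr ht0pos)
        (Set.mem_Ioi.mpr htpos) htt0 hE0
      rw [slope_def_field] at hslope
      have hden : 0 < t - t0 := by linarith
      have hnn : 0 ≤ E t - E t0 := by
        have h1 : (0:ℝ) ≤ (E t - E t0) / (t - t0) := hslope
        have h2 := mul_nonneg h1 hden.le
        rwa [div_mul_cancel₀ _ (ne_of_gt hden)] at h2
      linarith
    exact le_of_forall_pos_le_add hfinal
end

section
/- Fix $\mu, \delta \in L^1([0,1])$ with $\mu \ge 0$, $c > 0$, and suppose $c + \int_t^1 \mu(s)\,ds > 0$ for all $t \in [0,1]$. Define $S(s) = \frac{1}{2\alpha}\int_0^1 \frac{dt}{c + \int_t^1 (\mu(u) + s\,\delta(u))\,du}$ for $s$ in a neighborhood of $0$, and $\gamma(t) = (c + \int_t^1 \mu(u)du)^{-1}$. Then $S$ is differentiable at $0$ with $S'(0) = -\frac{1}{2\alpha}\int_0^1 \delta(t) \int_0^t \gamma(u)^2\,du\,dt$. -/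
open MeasureTheory intervalIntegral

lemma fubini_tri (g d : ℝ → ℝ) (hg : Continuous g)
    (hd : IntervalIntegrable d volume 0 1) :
    ∫ t in (0:ℝ)..1, (∫ u in t..(1:ℝ), d u) * g t
      = ∫ u in (0:ℝ)..1, d u * ∫ t in (0:ℝ)..u, g t := by
  set ν : Measure ℝ := volume.restrict (Set.Ioc 0 1) with hν
  have hd0 : IntegrableOn d (Set.Ioc 0 1) volume := by
    rwa [intervalIntegrable_iff_integrableOn_Ioc_of_le zero_le_one] at hd
  obtain ⟨d₀, hd₀m, hd₀e⟩ := hd0.aestronglyMeasurable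
  have hd₀int : IntegrableOn d₀ (Set.Ioc 0 1) volume := hd0.congr hd₀e
  have htail : ∀ t ∈ Set.Icc (0:ℝ) 1, (∫ u in t..(1:ℝ), d u) = ∫ u in Set.Ioc t 1, d₀ u := by
    intro t ht
    rw [integral_of_le ht.2]
    exact MeasureTheory.integral_congr_ae
      (MeasureTheory.ae_restrict_of_ae_restrict_of_subset (Set.Ioc_subset_Ioc ht.1 le_rfl) hd₀e)
  obtain ⟨C, hC⟩ := isCompact_Icc.exists_bound_of_continuousOn
    (hg.continuousOn : ContinuousOn g (Set.Icc 0 1))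
  set f : ℝ → ℝ → ℝ := fun t u => if t ≤ u then g t * d₀ u else 0 with hf
  have hfm : StronglyMeasurable (Function.uncurry f) := by
    apply Measurable.stronglyMeasurable
    exact Measurable.ite (measurableSet_le measurable_fst measurable_snd)
      ((hg.measurable.comp measurable_fst).mul (hd₀m.measurable.comp measurable_snd))
      measurable_const
  have hslice : ∀ t : ℝ, (fun u => f t u) = (Set.Ici t).indicator (fun u => g t * d₀ u) := by
    intro t; funext u; simp [hf, Set.indicator_apply, Set.mem_Ici]
  have hslice' : ∀ u : ℝ, (fun t => f t u) = (Set.Iic u).indicator (fun t => g t * d₀ u) := by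
    intro u; funext t; simp [hf, Set.indicator_apply, Set.mem_Iic]
  have hfint : Integrable (Function.uncurry f) (ν.prod ν) := by
    rw [MeasureTheory.integrable_prod_iff hfm.aestronglyMeasurable]
    constructor
    · refine Filter.Eventually.of_forall fun t => ?_
      show Integrable (fun u => f t u) ν
      rw [hslice t]
      exact ((hd₀int.const_mul (g t)).indicator measurableSet_Ici : _)
    · have hCd : Integrable (fun u => C * |d₀ u|) ν := hd₀int.norm.const_mul C
      refine Integrable.mono' (integrable_const (C * ∫ u, |d₀ u| ∂ν))
        (hfm.aestronglyMeasurable.norm.integral_prod_right') ?_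
      rw [hν]
      apply MeasureTheory.ae_restrict_of_forall_mem measurableSet_Ioc
      intro t ht
      have h1 : (∫ u, ‖f t u‖ ∂ν) ≤ ∫ u, C * |d₀ u| ∂ν := by
        refine MeasureTheory.integral_mono_of_nonneg
          (Filter.Eventually.of_forall fun u => norm_nonneg _) hCd
          (Filter.Eventually.of_forall fun u => ?_)
        have hgt : |g t| ≤ C := hC t ⟨le_of_lt ht.1, ht.2⟩
        have hC0 : (0:ℝ) ≤ C := le_trans (abs_nonneg _) hgt
        by_cases h : t ≤ u
        · simpa [hf, h, abs_mul] using mul_le_mul_of_nonneg_right hgt (abs_nonneg (d₀ u))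
        · simpa [hf, h] using mul_nonneg hC0 (abs_nonneg (d₀ u))
      have h2 : (0:ℝ) ≤ ∫ u, ‖f t u‖ ∂ν := by positivity
      show ‖∫ u, ‖f t u‖ ∂ν‖ ≤ C * ∫ u, |d₀ u| ∂ν
      rw [Real.norm_of_nonneg h2, ← MeasureTheory.integral_const_mul]
      exact h1
  have hswap := MeasureTheory.integral_integral_swap hfint
  -- identify LHS
  have hL : (∫ t, ∫ u, f t u ∂ν ∂ν) = ∫ t in (0:ℝ)..1, (∫ u in t..(1:ℝ), d u) * g t := by
    rw [integral_of_le zero_le_one]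
    refine MeasureTheory.integral_congr_ae ?_
    rw [hν]
    apply MeasureTheory.ae_restrict_of_forall_mem measurableSet_Ioc
    intro t ht
    have hIcc : t ∈ Set.Icc (0:ℝ) 1 := ⟨le_of_lt ht.1, ht.2⟩
    show (∫ u, f t u ∂ν) = (∫ u in t..(1:ℝ), d u) * g t
    rw [hslice t, MeasureTheory.integral_indicator measurableSet_Ici, hν,
      Measure.restrict_restrict measurableSet_Ici]
    have hset : Set.Ici t ∩ Set.Ioc 0 1 = Set.Icc t 1 := by
      ext u; constructor
      · rintro ⟨h1, h2, h3⟩; exact ⟨h1, h3⟩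
      · rintro ⟨h1, h2⟩; exact ⟨h1, lt_of_lt_of_le ht.1 h1, h2⟩
    rw [hset, MeasureTheory.integral_Icc_eq_integral_Ioc, MeasureTheory.integral_const_mul,
      htail t hIcc, mul_comm]
  -- identify RHS
  have hR : (∫ u, ∫ t, f t u ∂ν ∂ν) = ∫ u in (0:ℝ)..1, d u * ∫ t in (0:ℝ)..u, g t := by
    rw [integral_of_le zero_le_one]
    refine MeasureTheory.integral_congr_ae ?_
    have : ∀ᵐ u ∂ν, d u = d₀ u := hd₀e
    filter_upwards [this, MeasureTheory.ae_restrict_mem measurableSet_Ioc] with u hu hu2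
    show (∫ t, f t u ∂ν) = d u * ∫ t in (0:ℝ)..u, g t
    rw [hslice' u, MeasureTheory.integral_indicator measurableSet_Iic, hν,
      Measure.restrict_restrict measurableSet_Iic]
    have hset : Set.Iic u ∩ Set.Ioc 0 1 = Set.Ioc 0 u := by
      ext t; constructor
      · rintro ⟨h1, h2, h3⟩; exact ⟨h2, h1⟩
      · rintro ⟨h1, h2⟩; exact ⟨h2, h1, le_trans h2 hu2.2⟩
    rw [hset, MeasureTheory.integral_mul_const, integral_of_le (le_of_lt hu2.1), hu, mul_comm]
  rw [← hL, hswap, hR]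

lemma cont_tail (f : ℝ → ℝ) (hf : IntervalIntegrable f volume 0 1) :
    ContinuousOn (fun t => ∫ u in t..(1:ℝ), f u) (Set.Icc 0 1) := by
  have h : Set.Icc (0:ℝ) 1 = Set.uIcc 0 1 := (Set.uIcc_of_le zero_le_one).symm
  rw [h]
  exact continuousOn_primitive_interval_left (by rwa [Set.uIcc_of_le zero_le_one,
    ← intervalIntegrable_iff_integrableOn_Icc_of_le zero_le_one])

set_option maxHeartbeats 1000000 in
/-- First-order variation of the entropy term of the Parisi functional. -/
theorem entropy_first_variation (α c : ℝ) (hα : 0 < α) (hc : 0 < c)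
    (μ δ : ℝ → ℝ) (hμpos : ∀ t, 0 ≤ μ t)
    (hμint : IntervalIntegrable μ volume 0 1)
    (hδint : IntervalIntegrable δ volume 0 1)
    (hpos : ∀ t ∈ Set.Icc (0:ℝ) 1, 0 < c + ∫ u in t..(1:ℝ), μ u) :
    HasDerivAt
      (fun s : ℝ => (1 / (2 * α)) *
        ∫ t in (0:ℝ)..1, (c + ∫ u in t..(1:ℝ), (μ u + s * δ u))⁻¹)
      (-(1 / (2 * α)) *
        ∫ t in (0:ℝ)..1, δ t * ∫ u in (0:ℝ)..t, ((c + ∫ v in u..(1:ℝ), μ v)⁻¹) ^ 2)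
      0 := by
  set M : ℝ → ℝ := fun t => c + ∫ u in t..(1:ℝ), μ u with hMdef
  set D : ℝ → ℝ := fun t => ∫ u in t..(1:ℝ), δ u with hDdef
  have hMcont : ContinuousOn M (Set.Icc 0 1) :=
    continuousOn_const.add (cont_tail μ hμint)
  have hDcont : ContinuousOn D (Set.Icc 0 1) := cont_tail δ hδint
  -- positive lower bound m for M
  obtain ⟨t₀, ht₀, hmin⟩ := isCompact_Icc.exists_isMinOn
    (Set.nonempty_Icc.2 zero_le_one) hMcont
  obtain ⟨m, hm, hmle⟩ : ∃ m : ℝ, 0 < m ∧ ∀ t ∈ Set.Icc (0:ℝ) 1, m ≤ M t :=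
    ⟨M t₀, hpos t₀ ht₀, fun t ht => hmin ht⟩
  -- bound K for |D|
  obtain ⟨K₀, hK₀⟩ := isCompact_Icc.exists_bound_of_continuousOn hDcont
  obtain ⟨K, hKnn, hK⟩ : ∃ K : ℝ, 0 ≤ K ∧ ∀ t ∈ Set.Icc (0:ℝ) 1, |D t| ≤ K :=
    ⟨max K₀ 0, le_max_right _ _, fun t ht => le_trans (hK₀ t ht) (le_max_left _ _)⟩
  obtain ⟨ε, hε, hεK⟩ : ∃ ε : ℝ, 0 < ε ∧ ε * K ≤ m / 2 := by
    refine ⟨m / (2 * (K + 1)), by positivity, ?_⟩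
    rw [div_mul_eq_mul_div, div_le_div_iff₀ (by positivity) two_pos]
    nlinarith
  have hposst : ∀ s ∈ Metric.ball (0:ℝ) ε, ∀ t ∈ Set.Icc (0:ℝ) 1,
      m / 2 ≤ M t + s * D t := by
    intro s hs t ht
    have h1 : |s| < ε := by simpa [Real.dist_eq] using hs
    have h2 : |s * D t| ≤ ε * K := by
      rw [abs_mul]
      exact mul_le_mul h1.le (hK t ht) (abs_nonneg _) hε.le
    have h4 := hmle t ht
    have h5 := (abs_le.1 (h2.trans hεK)).1
    have h6 : m / 2 ≤ m + s * D t := by linarith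
    calc m / 2 ≤ m + s * D t := h6
      _ ≤ M t + s * D t := by linarith
  -- rewrite integrand
  have hμsub : ∀ t ∈ Set.Icc (0:ℝ) 1, IntervalIntegrable μ volume t 1 := by
    intro t ht
    refine hμint.mono_set ?_
    rw [Set.uIcc_of_le ht.2, Set.uIcc_of_le zero_le_one]
    exact Set.Icc_subset_Icc ht.1 le_rfl
  have hδsub : ∀ t ∈ Set.Icc (0:ℝ) 1, IntervalIntegrable δ volume t 1 := by
    intro t ht
    refine hδint.mono_set ?_
    rw [Set.uIcc_of_le ht.2, Set.uIcc_of_le zero_le_one]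
    exact Set.Icc_subset_Icc ht.1 le_rfl
  have hfun : ∀ s : ℝ, (∫ t in (0:ℝ)..1, (c + ∫ u in t..(1:ℝ), (μ u + s * δ u))⁻¹)
      = ∫ t in Set.Ioc (0:ℝ) 1, (M t + s * D t)⁻¹ := by
    intro s
    rw [← integral_of_le zero_le_one]
    apply intervalIntegral.integral_congr
    intro t ht
    rw [Set.uIcc_of_le zero_le_one] at ht
    show (c + ∫ u in t..(1:ℝ), (μ u + s * δ u))⁻¹
      = ((c + ∫ u in t..(1:ℝ), μ u) + s * ∫ u in t..(1:ℝ), δ u)⁻¹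
    rw [intervalIntegral.integral_add (hμsub t ht) ((hδsub t ht).const_mul s),
      intervalIntegral.integral_const_mul, add_assoc]
  -- measurability of the integrand family
  have hMD : ∀ s : ℝ, AEStronglyMeasurable (fun t => (M t + s * D t)⁻¹)
      (volume.restrict (Set.Ioc 0 1)) := by
    intro s
    have hcont : ContinuousOn (fun t => M t + s * D t) (Set.Icc 0 1) :=
      hMcont.add (continuousOn_const.mul hDcont)
    exact (((hcont.mono Set.Ioc_subset_Icc_self).aemeasurable
      measurableSet_Ioc).inv).aestronglyMeasurable
  have hDm : AEMeasurable D (volume.restrict (Set.Ioc 0 1)) :=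
    (hDcont.mono Set.Ioc_subset_Icc_self).aemeasurable measurableSet_Ioc
  have hMm : AEMeasurable M (volume.restrict (Set.Ioc 0 1)) :=
    (hMcont.mono Set.Ioc_subset_Icc_self).aemeasurable measurableSet_Ioc
  have hm2 : (0:ℝ) < m / 2 := by positivity
  have hball : (0:ℝ) ∈ Metric.ball (0:ℝ) ε := Metric.mem_ball_self hε
  -- integrability at 0
  have hFint : Integrable (fun t => (M t + (0:ℝ) * D t)⁻¹)
      (volume.restrict (Set.Ioc 0 1)) := by
    refine Integrable.mono' (integrable_const ((m/2)⁻¹)) (hMD 0) ?_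
    apply MeasureTheory.ae_restrict_of_forall_mem measurableSet_Ioc
    intro t ht
    have hp := hposst 0 hball t (Set.Ioc_subset_Icc_self ht)
    rw [Real.norm_eq_abs, abs_inv, abs_of_pos (lt_of_lt_of_le hm2 hp)]
    exact inv_anti₀ hm2 hp
  -- measurability of derivative at 0
  have hF'm : AEStronglyMeasurable (fun t => -D t / (M t + (0:ℝ) * D t)^2)
      (volume.restrict (Set.Ioc 0 1)) := by
    exact (hDm.neg.div ((hMm.add ((aemeasurable_const (b := (0:ℝ))).mul hDm)).pow
      aemeasurable_const)).aestronglyMeasurable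
  -- uniform bound for derivative
  have hbound : ∀ᵐ t ∂(volume.restrict (Set.Ioc (0:ℝ) 1)),
      ∀ s ∈ Metric.ball (0:ℝ) ε, ‖-D t / (M t + s * D t)^2‖ ≤ K / (m/2)^2 := by
    apply MeasureTheory.ae_restrict_of_forall_mem measurableSet_Ioc
    intro t ht s hs
    have hIcc := Set.Ioc_subset_Icc_self ht
    have hp := hposst s hs t hIcc
    rw [norm_div, norm_neg, Real.norm_eq_abs, Real.norm_eq_abs,
      abs_of_nonneg (sq_nonneg (M t + s * D t))]
    exact div_le_div₀ (hKnn) (hK t hIcc) (by positivity)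
      (pow_le_pow_left₀ hm2.le hp 2)
  -- differentiability of the family
  have hdiff : ∀ᵐ t ∂(volume.restrict (Set.Ioc (0:ℝ) 1)),
      ∀ s ∈ Metric.ball (0:ℝ) ε,
        HasDerivAt (fun s => (M t + s * D t)⁻¹) (-D t / (M t + s * D t)^2) s := by
    apply MeasureTheory.ae_restrict_of_forall_mem measurableSet_Ioc
    intro t ht s hs
    have hp := hposst s hs t (Set.Ioc_subset_Icc_self ht)
    have h0 : HasDerivAt (fun s : ℝ => M t + s * D t) (D t) s :=
      (hasDerivAt_mul_const (D t)).const_add (M t)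
    exact h0.inv (ne_of_gt (lt_of_lt_of_le hm2 hp))
  have key := (_root_.hasDerivAt_integral_of_dominated_loc_of_deriv_le
    (μ := volume.restrict (Set.Ioc (0:ℝ) 1)) (x₀ := (0:ℝ))
    (F := fun s t => (M t + s * D t)⁻¹)
    (F' := fun s t => -D t / (M t + s * D t)^2)
    (bound := fun _ => K / (m/2)^2)
    (Metric.ball_mem_nhds 0 hε) (Filter.Eventually.of_forall hMD) hFint hF'm hbound
    (integrable_const _) hdiff).2
  -- continuous global extension of ((M ·)⁻¹)^2
  set π : ℝ → ℝ := fun t => min (max t 0) 1 with hπ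
  have hπcont : Continuous π := (continuous_id.max continuous_const).min continuous_const
  have hπmem : ∀ t, π t ∈ Set.Icc (0:ℝ) 1 := fun t =>
    ⟨le_min (le_max_right _ _) zero_le_one, min_le_right _ _⟩
  have hgcontOn : ContinuousOn (fun t => ((M t)⁻¹)^2) (Set.Icc 0 1) :=
    (hMcont.inv₀ fun t ht => ne_of_gt (hpos t ht)).pow 2
  set g : ℝ → ℝ := fun t => ((M (π t))⁻¹)^2 with hg
  have hgcont : Continuous g := hgcontOn.comp_continuous hπcont hπmem
  have hgeq : ∀ t ∈ Set.Icc (0:ℝ) 1, g t = ((M t)⁻¹)^2 := by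
    intro t ht
    show ((M (min (max t 0) 1))⁻¹)^2 = ((M t)⁻¹)^2
    rw [max_eq_left ht.1, min_eq_left ht.2]
  -- identify the derivative value
  have e1 : (∫ t in Set.Ioc (0:ℝ) 1, -D t / (M t + 0 * D t)^2)
      = -(∫ t in (0:ℝ)..1, (∫ u in t..(1:ℝ), δ u) * g t) := by
    rw [← integral_of_le zero_le_one, ← intervalIntegral.integral_neg]
    apply intervalIntegral.integral_congr
    intro t ht
    rw [Set.uIcc_of_le zero_le_one] at ht
    show -D t / (M t + 0 * D t)^2 = -((∫ u in t..(1:ℝ), δ u) * g t)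
    rw [hgeq t ht, zero_mul, add_zero, div_eq_mul_inv, ← inv_pow]
    show -D t * ((M t)⁻¹)^2 = -(D t * ((M t)⁻¹)^2)
    ring
  have e2 : (∫ u in (0:ℝ)..1, δ u * ∫ t in (0:ℝ)..u, g t)
      = ∫ t in (0:ℝ)..1, δ t * ∫ u in (0:ℝ)..t, ((c + ∫ v in u..(1:ℝ), μ v)⁻¹) ^ 2 := by
    apply intervalIntegral.integral_congr
    intro u hu
    rw [Set.uIcc_of_le zero_le_one] at hu
    show δ u * ∫ t in (0:ℝ)..u, g t
      = δ u * ∫ v in (0:ℝ)..u, ((c + ∫ w in v..(1:ℝ), μ w)⁻¹) ^ 2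
    congr 1
    apply intervalIntegral.integral_congr
    intro v hv
    rw [Set.uIcc_of_le hu.1] at hv
    show g v = ((c + ∫ w in v..(1:ℝ), μ w)⁻¹) ^ 2
    rw [hgeq v ⟨hv.1, le_trans hv.2 hu.2⟩]
  have hval : (1 / (2 * α)) * (∫ t in Set.Ioc (0:ℝ) 1, -D t / (M t + 0 * D t)^2)
      = -(1 / (2 * α)) *
        ∫ t in (0:ℝ)..1, δ t * ∫ u in (0:ℝ)..t, ((c + ∫ v in u..(1:ℝ), μ v)⁻¹) ^ 2 := by
    rw [e1, fubini_tri g δ hgcont hδint, e2]; ring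
  have hfeq : (fun s : ℝ => (1 / (2 * α)) *
        ∫ t in (0:ℝ)..1, (c + ∫ u in t..(1:ℝ), (μ u + s * δ u))⁻¹)
      = fun s : ℝ => (1 / (2 * α)) * ∫ t in Set.Ioc (0:ℝ) 1, (M t + s * D t)⁻¹ :=
    funext fun s => by rw [hfun s]
  rw [hfeq, ← hval]
  exact key.const_mul (1 / (2 * α))
end

section
/- Let $h : \mathbb{R} \to \mathbb{R}$ be continuous, bounded above, and Lipschitz, and let $c > 0$. Then for every $x \in \mathbb{R}$, $\lim_{\beta \to \infty} \frac{1}{\beta}\log\left(\sqrt{\frac{\beta}{2\pi c}}\int_{\mathbb{R}} \exp\left(\beta h(x+u) - \frac{\beta u^2}{2c}\right) du\right) = \sup_{u \in \mathbb{R}}\left\{h(x+u) - \frac{u^2}{2c}\right\}$, and the convergence is uniform over compact sets of $x$. -/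
set_option maxHeartbeats 1000000

open MeasureTheory

lemma laplace_tendsto_aux (C : ℝ) :
    Filter.Tendsto (fun β : ℝ => β⁻¹ * (Real.log β / 2 + C)) Filter.atTop (nhds 0) := by
  have h1 : Filter.Tendsto (fun β : ℝ => Real.log β / β) Filter.atTop (nhds 0) := by
    have := Real.tendsto_pow_log_div_mul_add_atTop 1 0 1 one_ne_zero
    simpa using this
  have h2 : Filter.Tendsto (fun β : ℝ => β⁻¹) Filter.atTop (nhds (0:ℝ)) := tendsto_inv_atTop_zero
  have h3 := (h1.div_const 2).add (h2.const_mul C)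
  simp only [zero_div, mul_zero, add_zero, zero_add] at h3
  exact h3.congr fun β => by ring

lemma laplace_integrable_aux (h : ℝ → ℝ) (M : ℝ) (hM : ∀ t, h t ≤ M) (hcont : Continuous h)
    (c β x : ℝ) (hc : 0 < c) (hβ : 0 < β) :
    Integrable (fun u : ℝ => Real.exp (β * h (x + u) - β * u ^ 2 / (2 * c))) := by
  have hb : 0 < β / (2 * c) := by positivity
  have hint : Integrable (fun u : ℝ => Real.exp (β * M) * Real.exp (-(β / (2 * c)) * u ^ 2)) :=
    (integrable_exp_neg_mul_sq hb).const_mul _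
  refine hint.mono' ?_ ?_
  · exact (Real.continuous_exp.comp (by fun_prop)).aestronglyMeasurable
  · filter_upwards with u
    rw [Real.norm_eq_abs, abs_of_pos (Real.exp_pos _), ← Real.exp_add]
    apply Real.exp_le_exp.2
    have h1 : β * h (x + u) ≤ β * M := mul_le_mul_of_nonneg_left (hM (x + u)) hβ.le
    have h2 : β * u ^ 2 / (2 * c) = -(-(β / (2 * c)) * u ^ 2) := by ring
    linarith

/-- Laplace (zero-temperature) limit: the free energy converges, uniformly on compacts,
to the sup-convolution of h with the quadratic penalty. -/
theorem laplace_limit (h : ℝ → ℝ) (c L : ℝ)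
    (hcont : Continuous h) (hbdd : BddAbove (Set.range h))
    (hL : ∀ x y, |h x - h y| ≤ L * |x - y|) (hc : 0 < c)
    (K : Set ℝ) (hK : IsCompact K) :
    TendstoUniformlyOn
      (fun (β : ℝ) (x : ℝ) =>
        β⁻¹ * Real.log (Real.sqrt (β / (2 * Real.pi * c)) *
          ∫ u : ℝ, Real.exp (β * h (x + u) - β * u ^ 2 / (2 * c))))
      (fun x => sSup {y : ℝ | ∃ u : ℝ, y = h (x + u) - u ^ 2 / (2 * c)})
      Filter.atTop K := by
  classical
  have hπc : (0:ℝ) < 2 * Real.pi * c := by positivity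
  have hL0 : 0 ≤ L := by
    by_contra h'
    push_neg at h'
    have h1 := hL 0 1
    have h2 : |(0:ℝ) - 1| = 1 := by norm_num
    rw [h2, mul_one] at h1
    linarith [abs_nonneg (h 0 - h 1)]
  set M := sSup (Set.range h) with hMdef
  have hM : ∀ t, h t ≤ M := fun t => le_csSup hbdd ⟨t, rfl⟩
  have hSbdd : ∀ x : ℝ, BddAbove {y : ℝ | ∃ u : ℝ, y = h (x + u) - u ^ 2 / (2 * c)} := by
    intro x
    refine ⟨M, ?_⟩
    rintro y ⟨u, rfl⟩
    have hu : 0 ≤ u ^ 2 / (2 * c) := by positivity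
    linarith [hM (x + u)]
  have hSne : ∀ x : ℝ, ({y : ℝ | ∃ u : ℝ, y = h (x + u) - u ^ 2 / (2 * c)} : Set ℝ).Nonempty :=
    fun x => ⟨h (x + 0) - 0 ^ 2 / (2 * c), 0, rfl⟩
  set f : ℝ → ℝ := fun x => sSup {y : ℝ | ∃ u : ℝ, y = h (x + u) - u ^ 2 / (2 * c)} with hfdef
  have hmem : ∀ x u : ℝ, h (x + u) - u ^ 2 / (2 * c) ≤ f x :=
    fun x u => le_csSup (hSbdd x) ⟨u, rfl⟩
  have hfM : ∀ x, f x ≤ M := by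
    intro x
    apply csSup_le (hSne x)
    rintro y ⟨u, rfl⟩
    have hu : 0 ≤ u ^ 2 / (2 * c) := by positivity
    linarith [hM (x + u)]
  have hfh : ∀ x, h x ≤ f x := by
    intro x
    have e : h x = h (x + 0) - 0 ^ 2 / (2 * c) := by norm_num
    rw [e]
    exact hmem x 0
  have hInt : ∀ β x : ℝ, 0 < β →
      Integrable (fun u : ℝ => Real.exp (β * h (x + u) - β * u ^ 2 / (2 * c))) :=
    fun β x hβ => laplace_integrable_aux h M hM hcont c β x hc hβ
  have hgauss : (∫ u : ℝ, Real.exp (-(1 / (2 * c)) * u ^ 2)) = Real.sqrt (2 * Real.pi * c) := by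
    rw [integral_gaussian]
    congr 1
    field_simp
  rw [Metric.tendstoUniformlyOn_iff]
  intro ε hε
  rcases Set.eq_empty_or_nonempty K with rfl | hKne
  · filter_upwards with β
    intro x hx
    exact absurd hx (Set.notMem_empty x)
  obtain ⟨x₀, hx₀, hminOn⟩ := hK.exists_isMinOn hKne hcont.continuousOn
  set m := h x₀ with hmdef
  have hmM : m ≤ M := hM x₀
  have hfm : ∀ x ∈ K, m ≤ f x := fun x hx => le_trans (hminOn hx) (hfh x)
  set R := Real.sqrt (2 * c * (M - m + 1)) with hRdef
  have hR0 : 0 ≤ R := Real.sqrt_nonneg _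
  set C' := L + (2 * R + 1) / (2 * c) with hC'def
  have hC'pos : 0 < C' := add_pos_of_nonneg_of_pos hL0 (by positivity)
  set δ := min 1 (ε / (4 * C')) with hδdef
  have hδpos : 0 < δ := lt_min one_pos (by positivity)
  have hδ1 : δ ≤ 1 := min_le_left _ _
  have hδC' : δ * C' ≤ ε / 4 := by
    have h1 : δ ≤ ε / (4 * C') := min_le_right _ _
    have h2 : δ * C' ≤ (ε / (4 * C')) * C' := mul_le_mul_of_nonneg_right h1 hC'pos.le
    have h3 : (ε / (4 * C')) * C' = ε / 4 := by field_simp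
    linarith
  set ε' := min 1 (ε / 4) with hε'def
  have hε'pos : 0 < ε' := lt_min one_pos (by positivity)
  have hε'1 : ε' ≤ 1 := min_le_left _ _
  have hε'4 : ε' ≤ ε / 4 := min_le_right _ _
  -- eventual bounds
  have hT1 := laplace_tendsto_aux (M - m)
  have hT2 := laplace_tendsto_aux (Real.log δ - Real.log (2 * Real.pi * c) / 2)
  have hE1 : ∀ᶠ β : ℝ in Filter.atTop, β⁻¹ * (Real.log β / 2 + (M - m)) < ε :=
    hT1.eventually_lt_const hε
  have hE2 : ∀ᶠ β : ℝ in Filter.atTop,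
      -(ε / 4) < β⁻¹ * (Real.log β / 2 + (Real.log δ - Real.log (2 * Real.pi * c) / 2)) :=
    hT2.eventually_const_lt (by linarith)
  filter_upwards [hE1, hE2, Filter.eventually_ge_atTop (1:ℝ)] with β h1 h2 hβ1
  intro x hx
  have hβ0 : (0:ℝ) < β := lt_of_lt_of_le one_pos hβ1
  have hβne : β ≠ 0 := hβ0.ne'
  have hbinv : (0:ℝ) ≤ β⁻¹ := (inv_pos.2 hβ0).le
  set I := ∫ u : ℝ, Real.exp (β * h (x + u) - β * u ^ 2 / (2 * c)) with hIdef
  have hIpos : 0 < I := integral_exp_pos (hInt β x hβ0)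
  set A := Real.sqrt (β / (2 * Real.pi * c)) * I with hAdef
  have hsq_pos : 0 < Real.sqrt (β / (2 * Real.pi * c)) := Real.sqrt_pos.2 (by positivity)
  have hApos : 0 < A := mul_pos hsq_pos hIpos
  -- Upper bound
  have hInt1 : Integrable (fun u : ℝ => Real.exp (h (x + u) - u ^ 2 / (2 * c))) := by
    have := hInt 1 x one_pos
    simpa using this
  have hIub : I ≤ Real.exp ((β - 1) * f x) * (Real.exp M * Real.sqrt (2 * Real.pi * c)) := by
    have step1 : I ≤ ∫ u : ℝ, Real.exp ((β - 1) * f x) * Real.exp (h (x + u) - u ^ 2 / (2 * c)) := by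
      apply integral_mono (hInt β x hβ0) (hInt1.const_mul _)
      intro u
      beta_reduce
      rw [← Real.exp_add]
      apply Real.exp_le_exp.2
      have hfu := hmem x u
      have h' : (β - 1) * (h (x + u) - u ^ 2 / (2 * c)) ≤ (β - 1) * f x :=
        mul_le_mul_of_nonneg_left hfu (by linarith)
      have e : β * h (x + u) - β * u ^ 2 / (2 * c)
          = (β - 1) * (h (x + u) - u ^ 2 / (2 * c)) + (h (x + u) - u ^ 2 / (2 * c)) := by ring
      linarith
    have step2 : (∫ u : ℝ, Real.exp ((β - 1) * f x) * Real.exp (h (x + u) - u ^ 2 / (2 * c)))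
        = Real.exp ((β - 1) * f x) * ∫ u : ℝ, Real.exp (h (x + u) - u ^ 2 / (2 * c)) :=
      integral_const_mul _ _
    have step3 : (∫ u : ℝ, Real.exp (h (x + u) - u ^ 2 / (2 * c)))
        ≤ Real.exp M * Real.sqrt (2 * Real.pi * c) := by
      have hstep : (∫ u : ℝ, Real.exp (h (x + u) - u ^ 2 / (2 * c)))
          ≤ ∫ u : ℝ, Real.exp M * Real.exp (-(1 / (2 * c)) * u ^ 2) := by
        apply integral_mono hInt1 ((integrable_exp_neg_mul_sq (by positivity)).const_mul _)
        intro u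
        beta_reduce
        rw [← Real.exp_add]
        apply Real.exp_le_exp.2
        have := hM (x + u)
        have he : -(1 / (2 * c)) * u ^ 2 = -(u ^ 2 / (2 * c)) := by ring
        linarith [he ▸ le_refl (-(1 / (2 * c)) * u ^ 2)]
      rw [integral_const_mul, hgauss] at hstep
      exact hstep
    calc I ≤ Real.exp ((β - 1) * f x) * ∫ u : ℝ, Real.exp (h (x + u) - u ^ 2 / (2 * c)) := by
            rw [← step2]; exact step1
      _ ≤ Real.exp ((β - 1) * f x) * (Real.exp M * Real.sqrt (2 * Real.pi * c)) :=
            mul_le_mul_of_nonneg_left step3 (Real.exp_pos _).le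
  have hsqrt_mul : Real.sqrt (β / (2 * Real.pi * c)) * Real.sqrt (2 * Real.pi * c)
      = Real.sqrt β := by
    rw [← Real.sqrt_mul (by positivity)]
    congr 1
    field_simp
  have hAub : A ≤ Real.sqrt β * Real.exp ((β - 1) * f x + M) := by
    calc A ≤ Real.sqrt (β / (2 * Real.pi * c)) *
          (Real.exp ((β - 1) * f x) * (Real.exp M * Real.sqrt (2 * Real.pi * c))) :=
        mul_le_mul_of_nonneg_left hIub hsq_pos.le
      _ = Real.sqrt β * Real.exp ((β - 1) * f x + M) := by
        rw [← hsqrt_mul, Real.exp_add]; ring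
  have hlogub : Real.log A ≤ Real.log β / 2 + ((β - 1) * f x + M) := by
    have hlog := Real.log_le_log hApos hAub
    rwa [Real.log_mul (Real.sqrt_pos.2 hβ0).ne' (Real.exp_ne_zero _),
      Real.log_sqrt hβ0.le, Real.log_exp] at hlog
  have key1 : β⁻¹ * Real.log A - f x < ε := by
    have e1 : β⁻¹ * Real.log A ≤ β⁻¹ * (Real.log β / 2 + ((β - 1) * f x + M)) :=
      mul_le_mul_of_nonneg_left hlogub hbinv
    have e2 : β⁻¹ * (Real.log β / 2 + ((β - 1) * f x + M))
        = β⁻¹ * (Real.log β / 2 + (M - f x)) + f x := by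
      field_simp
      ring
    have e3 : β⁻¹ * (Real.log β / 2 + (M - f x)) ≤ β⁻¹ * (Real.log β / 2 + (M - m)) :=
      mul_le_mul_of_nonneg_left (by linarith [hfm x hx]) hbinv
    linarith
  -- Lower bound
  have hfx' : f x - ε' < f x := by linarith
  obtain ⟨y, hyS, hy⟩ := exists_lt_of_lt_csSup (hSne x) hfx'
  obtain ⟨u₀, rfl⟩ := hyS
  have hu₀R : |u₀| ≤ R := by
    have hdiv : u₀ ^ 2 / (2 * c) ≤ M - m + 1 := by
      have := hM (x + u₀)
      have := hfm x hx
      linarith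
    have hsq : u₀ ^ 2 ≤ 2 * c * (M - m + 1) := by
      have := (div_le_iff₀ (by positivity : (0:ℝ) < 2 * c)).1 hdiv
      linarith
    calc |u₀| = Real.sqrt (u₀ ^ 2) := (Real.sqrt_sq_eq_abs u₀).symm
      _ ≤ R := Real.sqrt_le_sqrt hsq
  have hptg : ∀ u ∈ Set.Icc u₀ (u₀ + δ), f x - ε' - δ * C' ≤ h (x + u) - u ^ 2 / (2 * c) := by
    intro u hu
    obtain ⟨hu1, hu2⟩ := hu
    have hLb : h (x + u₀) - L * δ ≤ h (x + u) := by
      have habs := hL (x + u₀) (x + u)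
      have he : |(x + u₀) - (x + u)| = u - u₀ := by
        rw [show (x + u₀) - (x + u) = -(u - u₀) by ring, abs_neg, abs_of_nonneg (by linarith)]
      rw [he] at habs
      have h5 : h (x + u₀) - h (x + u) ≤ L * (u - u₀) :=
        le_trans (le_abs_self _) habs
      have h6 : L * (u - u₀) ≤ L * δ := mul_le_mul_of_nonneg_left (by linarith) hL0
      linarith
    have hsqb : u ^ 2 - u₀ ^ 2 ≤ δ * (2 * R + 1) := by
      have hp1 : u + u₀ ≤ 2 * R + 1 := by
        have := (abs_le.1 hu₀R).2
        linarith
      have hp2 : (0:ℝ) ≤ u - u₀ := by linarith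
      have hp3 : u - u₀ ≤ δ := by linarith
      have q1 : (u - u₀) * (u + u₀) ≤ (u - u₀) * (2 * R + 1) :=
        mul_le_mul_of_nonneg_left hp1 hp2
      have q2 : (u - u₀) * (2 * R + 1) ≤ δ * (2 * R + 1) :=
        mul_le_mul_of_nonneg_right hp3 (by linarith)
      nlinarith
    have h4 : (u ^ 2 - u₀ ^ 2) / (2 * c) ≤ δ * (2 * R + 1) / (2 * c) := by
      gcongr
    have hring : u ^ 2 / (2 * c) = u₀ ^ 2 / (2 * c) + (u ^ 2 - u₀ ^ 2) / (2 * c) := by ring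
    have hC'ring : δ * C' = δ * L + δ * (2 * R + 1) / (2 * c) := by
      rw [hC'def]; ring
    linarith
  have hIlb : δ * Real.exp (β * (f x - ε' - δ * C')) ≤ I := by
    have hvol : (volume (Set.Icc u₀ (u₀ + δ))).toReal = δ := by
      rw [Real.volume_Icc]
      rw [show u₀ + δ - u₀ = δ by ring]
      exact ENNReal.toReal_ofReal hδpos.le
    have hstep : (∫ _ in Set.Icc u₀ (u₀ + δ), Real.exp (β * (f x - ε' - δ * C')))
        ≤ ∫ u in Set.Icc u₀ (u₀ + δ), Real.exp (β * h (x + u) - β * u ^ 2 / (2 * c)) := by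
      apply setIntegral_mono_on (integrableOn_const measure_Icc_lt_top.ne)
        ((hInt β x hβ0).integrableOn) measurableSet_Icc
      intro u hu
      apply Real.exp_le_exp.2
      have hp := hptg u hu
      have h' : β * (f x - ε' - δ * C') ≤ β * (h (x + u) - u ^ 2 / (2 * c)) :=
        mul_le_mul_of_nonneg_left hp hβ0.le
      have e : β * h (x + u) - β * u ^ 2 / (2 * c) = β * (h (x + u) - u ^ 2 / (2 * c)) := by ring
      linarith
    rw [setIntegral_const, measureReal_def, hvol, smul_eq_mul] at hstep
    calc δ * Real.exp (β * (f x - ε' - δ * C')) ≤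
        ∫ u in Set.Icc u₀ (u₀ + δ), Real.exp (β * h (x + u) - β * u ^ 2 / (2 * c)) := hstep
      _ ≤ I := setIntegral_le_integral (hInt β x hβ0)
          (Filter.Eventually.of_forall fun u => (Real.exp_pos _).le)
  have hAlb : Real.sqrt (β / (2 * Real.pi * c)) * δ * Real.exp (β * (f x - ε' - δ * C')) ≤ A := by
    calc Real.sqrt (β / (2 * Real.pi * c)) * δ * Real.exp (β * (f x - ε' - δ * C'))
        = Real.sqrt (β / (2 * Real.pi * c)) * (δ * Real.exp (β * (f x - ε' - δ * C'))) := by ring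
      _ ≤ Real.sqrt (β / (2 * Real.pi * c)) * I := mul_le_mul_of_nonneg_left hIlb hsq_pos.le
  have hlblb_pos : 0 < Real.sqrt (β / (2 * Real.pi * c)) * δ * Real.exp (β * (f x - ε' - δ * C')) :=
    mul_pos (mul_pos hsq_pos hδpos) (Real.exp_pos _)
  have hloglb : Real.log (Real.sqrt (β / (2 * Real.pi * c)) * δ) + β * (f x - ε' - δ * C')
      ≤ Real.log A := by
    have hlog := Real.log_le_log hlblb_pos hAlb
    rwa [Real.log_mul (mul_pos hsq_pos hδpos).ne' (Real.exp_ne_zero _), Real.log_exp] at hlog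
  have hlogeq : Real.log (Real.sqrt (β / (2 * Real.pi * c)) * δ)
      = Real.log β / 2 + (Real.log δ - Real.log (2 * Real.pi * c) / 2) := by
    rw [Real.log_mul hsq_pos.ne' hδpos.ne', Real.log_sqrt (by positivity),
      Real.log_div hβne hπc.ne']
    ring
  have key2 : f x - β⁻¹ * Real.log A < ε := by
    have e1 : β⁻¹ * (Real.log (Real.sqrt (β / (2 * Real.pi * c)) * δ) + β * (f x - ε' - δ * C'))
        ≤ β⁻¹ * Real.log A := mul_le_mul_of_nonneg_left hloglb hbinv
    have e2 : β⁻¹ * (Real.log (Real.sqrt (β / (2 * Real.pi * c)) * δ) + β * (f x - ε' - δ * C'))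
        = β⁻¹ * (Real.log β / 2 + (Real.log δ - Real.log (2 * Real.pi * c) / 2))
          + (f x - ε' - δ * C') := by
      rw [hlogeq]
      field_simp
    rw [e2] at e1
    linarith
  rw [Real.dist_eq, abs_sub_lt_iff]
  exact ⟨key2, key1⟩
end
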